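/- Fix k ≥ 3 and let S = ⟨2k+1, 6k-5, 6k-1⟩. Then the set of catenary degrees C(S) contains {4, 3k-1} and contains the interval {2k-1, 2k, ..., 3k-3}. In particular |C(S)| ≥ k. -/

import Mathlib

/-- The set of factorizations of `n` over the generators `gens`. -/
def Zset {k : ℕ} (gens : Fin k → ℕ) (n : ℕ) : Set (Fin k → ℕ) :=
  {a | ∑ i, a i * gens i = n}

/-- The length of a factorization. -/
def flen {k : ℕ} (a : Fin k → ℕ) : ℕ := ∑ i, a i

/-- The distance between two factorizations:
`max (|a - gcd(a,b)|, |b - gcd(a,b)|)` (componentwise gcd = min). -/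
def fdist {k : ℕ} (a b : Fin k → ℕ) : ℕ :=
  max (∑ i, (a i - b i)) (∑ i, (b i - a i))

/-- There is an `N`-chain of factorizations within `Z` from `a` to `b`. -/
def IsNChain {k : ℕ} (Z : Set (Fin k → ℕ)) (N : ℕ) (a b : Fin k → ℕ) : Prop :=
  ∃ l : List (Fin k → ℕ), l.head? = some a ∧ l.getLast? = some b ∧
    (∀ x ∈ l, x ∈ Z) ∧ l.Chain' (fun x y => fdist x y ≤ N)

/-- The catenary degree of `n`: the least `N` such that any two factorizations
of `n` are connected by an `N`-chain. -/
noncomputable def catDeg {k : ℕ} (gens : Fin k → ℕ) (n : ℕ) : ℕ :=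
  sInf {N | ∀ a ∈ Zset gens n, ∀ b ∈ Zset gens n, IsNChain (Zset gens n) N a b}

/-- `n` is a Betti element: the graph on `Z(n)` joining factorizations with
nonzero componentwise gcd is disconnected. -/
def IsBetti {k : ℕ} (gens : Fin k → ℕ) (n : ℕ) : Prop :=
  ∃ a ∈ Zset gens n, ∃ b ∈ Zset gens n,
    ¬ Relation.ReflTransGen
      (fun x y => x ∈ Zset gens n ∧ y ∈ Zset gens n ∧ ∃ i, min (x i) (y i) ≠ 0) a b

/-- The set of catenary degrees of elements of the monoid generated by `gens`. -/
def CatSet {k : ℕ} (gens : Fin k → ℕ) : Set ℕ :=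
  {c | ∃ n, (Zset gens n).Nonempty ∧ catDeg gens n = c}

/-!
Write `k = K + 3`, so that the generators are `g₀ = 2K+7`, `g₁ = 3g₀ - 8` and `g₂ = 3g₀ - 4`.
A factorization `x` of `n` then satisfies `n = (x₀+3x₁+3x₂)g₀ - 4(2x₁+x₂)`; as `g₀` is odd, any two
factorizations `x`, `y` of `n` differ by an integer `r` with `2x₁+x₂ = 2y₁+y₂ + r g₀`, and bounding
`r` determines `Z(n)` for three families of witnesses:
* `2g₂` has exactly the factorizations `(0,0,2)` and `(3,1,0)`, at distance `4`;
* `(3K+8)g₀` has exactly `(3K+8,0,0)` and `(0,K+3,1)`, at distance `3K+8`;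
* for `s ≤ K+1`, `(K+4+s)g₁` has `(0,K+4+s,0)` and the `4`-chain `(3K+5-3i, s-i, 2i+1)`, `i ≤ s`,
  whose member closest to `(0,K+4+s,0)` is at distance `3K+6-s`.
For the cardinality bound `C(S)` must be finite: steps of length at most `2K+5` bring any
factorization to one with `x₁ ≤ 2K+4` and `x₂ ≤ 1`, and any two of those are within distance
`3K+8`, so `c(n) ≤ 3K+8`.
-/

section Chains

variable {m : ℕ} {Z : Set (Fin m → ℕ)} {N : ℕ} {a b c : Fin m → ℕ}

theorem fdist_comm (a b : Fin m → ℕ) : fdist a b = fdist b a := max_comm _ _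

@[simp]
theorem fdist_self (a : Fin m → ℕ) : fdist a a = 0 := by simp [fdist]

theorem fdist_fin_three (x y : Fin 3 → ℕ) :
    fdist x y = max (x 0 - y 0 + (x 1 - y 1) + (x 2 - y 2))
      (y 0 - x 0 + (y 1 - x 1) + (y 2 - x 2)) := by
  simp [fdist, Fin.sum_univ_three]

namespace IsNChain

theorem refl (ha : a ∈ Z) : IsNChain Z N a a :=
  ⟨[a], rfl, rfl, by simpa using ha, List.isChain_singleton _⟩

theorem of_fdist_le (ha : a ∈ Z) (hb : b ∈ Z) (h : fdist a b ≤ N) : IsNChain Z N a b :=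
  ⟨[a, b], rfl, rfl, by simp [ha, hb], List.isChain_pair.2 h⟩

theorem symm (h : IsNChain Z N a b) : IsNChain Z N b a := by
  obtain ⟨l, hhead, hlast, hmem, hchain⟩ := h
  refine ⟨l.reverse, by simpa using hlast, by simpa using hhead, by simpa using hmem, ?_⟩
  exact List.isChain_reverse.2 (hchain.imp fun x y h => (fdist_comm y x).trans_le h)

theorem trans (hab : IsNChain Z N a b) (hbc : IsNChain Z N b c) : IsNChain Z N a c := by
  obtain ⟨l₁, hhead₁, hlast₁, hmem₁, hchain₁⟩ := hab
  obtain ⟨l₂, hhead₂, hlast₂, hmem₂, hchain₂⟩ := hbc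
  refine ⟨l₁ ++ l₂, ?_, ?_, ?_, ?_⟩
  · rw [List.head?_append, hhead₁]; rfl
  · rw [List.getLast?_append, hlast₂]
    cases l₂ <;> simp_all
  · simpa [or_imp, forall_and] using And.intro hmem₁ hmem₂
  · refine hchain₁.append hchain₂ fun x hx y hy => ?_
    rw [hlast₁, Option.mem_some_iff] at hx
    rw [hhead₂, Option.mem_some_iff] at hy
    simp [← hx, ← hy]

theorem eq_of_isolated (h : IsNChain Z N a b) (hfar : ∀ x ∈ Z, x ≠ a → N < fdist a x) :
    a = b := by
  obtain ⟨l, hhead, hlast, hmem, hchain⟩ := h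
  induction l with
  | nil => simp at hhead
  | cons x t ih =>
    obtain rfl : x = a := by simpa using hhead
    cases t with
    | nil => simpa using hlast
    | cons y t =>
      obtain rfl : y = x := by
        by_contra hyx
        have := hfar y (hmem y (by simp)) hyx
        exact absurd (List.isChain_cons_cons.1 hchain).1 (by omega)
      exact ih (by simp) (by simpa using hlast) (fun z hz => hmem z (by simp [hz]))
        (List.isChain_cons_cons.1 hchain).2

end IsNChain

theorem catDeg_eq_of_isolated {gens : Fin m → ℕ} {n : ℕ}
    (hconn : ∀ x ∈ Zset gens n, ∀ y ∈ Zset gens n, IsNChain (Zset gens n) N x y)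
    (ha : a ∈ Zset gens n) (hb : b ∈ Zset gens n) (hab : a ≠ b)
    (hfar : ∀ x ∈ Zset gens n, x ≠ a → N ≤ fdist a x) :
    catDeg gens n = N := by
  refine le_antisymm (Nat.sInf_le hconn) (le_csInf ⟨N, hconn⟩ fun M hM => ?_)
  by_contra! hMN
  exact hab ((hM a ha b hb).eq_of_isolated fun x hx hxa => hMN.trans_le (hfar x hx hxa))

theorem catDeg_eq_fdist_of_pair {gens : Fin m → ℕ} {n : ℕ} (hab : a ≠ b)
    (hZ : ∀ x, x ∈ Zset gens n ↔ x = a ∨ x = b) :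
    catDeg gens n = fdist a b := by
  have ha := (hZ a).2 (.inl rfl)
  have hb := (hZ b).2 (.inr rfl)
  have hto_a : ∀ x ∈ Zset gens n, IsNChain (Zset gens n) (fdist a b) x a := by
    intro x hx
    rcases (hZ x).1 hx with rfl | rfl
    · exact .refl ha
    · exact .of_fdist_le hx ha (fdist_comm x a).le
  refine catDeg_eq_of_isolated (fun x hx y hy => (hto_a x hx).trans (hto_a y hy).symm)
    ha hb hab fun x hx hxa => ?_
  rcases (hZ x).1 hx with rfl | rfl
  exacts [absurd rfl hxa, le_rfl]

end Chains

theorem vec3_eq_iff {α : Type*} {x : Fin 3 → α} {a b c : α} :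
    x = ![a, b, c] ↔ x 0 = a ∧ x 1 = b ∧ x 2 = c := by
  refine ⟨by rintro rfl; simp, fun ⟨h₀, h₁, h₂⟩ => ?_⟩
  funext i
  fin_cases i <;> assumption

namespace CatSetLarge

def gens (K : ℕ) : Fin 3 → ℕ := ![2 * K + 7, 6 * K + 13, 6 * K + 17]

variable {K n : ℕ} {x y : Fin 3 → ℕ}

theorem mem_Zset_gens :
    x ∈ Zset (gens K) n ↔ x 0 * (2 * K + 7) + x 1 * (6 * K + 13) + x 2 * (6 * K + 17) = n := by
  simp [Zset, gens, Fin.sum_univ_three]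

theorem exists_trade_multiple (hx : x ∈ Zset (gens K) n) (hy : y ∈ Zset (gens K) n) :
    ∃ r : ℤ, (x 0 + 3 * x 1 + 3 * x 2 : ℤ) = y 0 + 3 * y 1 + 3 * y 2 + 4 * r ∧
      (2 * x 1 + x 2 : ℤ) = 2 * y 1 + y 2 + r * (2 * K + 7) := by
  have hx' := mem_Zset_gens.1 hx
  have hy' := mem_Zset_gens.1 hy
  zify at hx' hy'
  have hq : ((x 0 + 3 * x 1 + 3 * x 2 : ℤ) - (y 0 + 3 * y 1 + 3 * y 2)) * (2 * K + 7) =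
      4 * ((2 * x 1 + x 2 : ℤ) - (2 * y 1 + y 2)) := by
    linear_combination hx' - hy'
  have hcop : IsCoprime (4 : ℤ) (2 * K + 7) := by
    simpa using (show IsCoprime (2 : ℤ) (2 * K + 7) from ⟨-(K + 3), 1, by ring⟩).pow_left (m := 2)
  obtain ⟨r, hr⟩ := hcop.dvd_of_dvd_mul_right ⟨_, hq⟩
  refine ⟨r, by linarith, ?_⟩
  rw [hr] at hq
  linarith

theorem tail_mul_le (hx : x ∈ Zset (gens K) n) : (x 1 + x 2) * (6 * K + 13) ≤ n := by
  rw [← mem_Zset_gens.1 hx]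
  nlinarith

theorem mem_Zset_mul_gens_two_iff :
    x ∈ Zset (gens K) (2 * (6 * K + 17)) ↔ x = ![0, 0, 2] ∨ x = ![3, 1, 0] := by
  have h₀ : ![0, 0, 2] ∈ Zset (gens K) (2 * (6 * K + 17)) := by simp [mem_Zset_gens]
  refine ⟨fun hx => ?_, by rintro (rfl | rfl); exacts [h₀, by simp [mem_Zset_gens]; ring]⟩
  obtain ⟨r, hL, hM⟩ := exists_trade_multiple hx h₀
  simp only [Matrix.cons_val] at hL hM
  have htail : x 1 + x 2 ≤ 2 := by nlinarith [tail_mul_le hx]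
  have hr₁ : r < 1 := Int.lt_of_mul_lt_mul_right (a := 2 * K + 7) (by omega) (by omega)
  have hr₂ : -1 < r := Int.lt_of_mul_lt_mul_right (a := 2 * K + 7) (by omega) (by omega)
  obtain rfl : r = 0 := by omega
  simp only [vec3_eq_iff]
  omega

theorem mem_Zset_mul_gens_zero_iff :
    x ∈ Zset (gens K) ((3 * K + 8) * (2 * K + 7)) ↔
      x = ![3 * K + 8, 0, 0] ∨ x = ![0, K + 3, 1] := by
  have h₀ : ![3 * K + 8, 0, 0] ∈ Zset (gens K) ((3 * K + 8) * (2 * K + 7)) := by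
    simp [mem_Zset_gens]
  refine ⟨fun hx => ?_, by rintro (rfl | rfl); exacts [h₀, by simp [mem_Zset_gens]; ring]⟩
  obtain ⟨r, hL, hM⟩ := exists_trade_multiple hx h₀
  simp only [Matrix.cons_val] at hL hM
  have htail : x 1 + x 2 ≤ K + 4 := by nlinarith [tail_mul_le hx]
  have hr₁ : r < 2 := Int.lt_of_mul_lt_mul_right (a := 2 * K + 7) (by omega) (by omega)
  have hr₂ : -1 < r := Int.lt_of_mul_lt_mul_right (a := 2 * K + 7) (by omega) (by omega)
  obtain rfl | rfl : r = 0 ∨ r = 1 := by omega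
  all_goals simp only [vec3_eq_iff]; omega

theorem mem_Zset_mul_gens_one_iff {s : ℕ} (hs : s ≤ K + 1) :
    x ∈ Zset (gens K) ((K + 4 + s) * (6 * K + 13)) ↔
      x = ![0, K + 4 + s, 0] ∨ ∃ i ≤ s, x = ![3 * K + 5 - 3 * i, s - i, 2 * i + 1] := by
  have h₀ : ![0, K + 4 + s, 0] ∈ Zset (gens K) ((K + 4 + s) * (6 * K + 13)) := by
    simp [mem_Zset_gens]
  constructor
  · intro hx
    obtain ⟨r, hL, hM⟩ := exists_trade_multiple hx h₀
    simp only [Matrix.cons_val] at hL hM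
    have htail : x 1 + x 2 ≤ K + 4 + s :=
      Nat.le_of_mul_le_mul_right (tail_mul_le hx) (by omega)
    have hr₁ : r < 1 := Int.lt_of_mul_lt_mul_right (a := 2 * K + 7) (by omega) (by omega)
    have hr₂ : -2 < r := Int.lt_of_mul_lt_mul_right (a := 2 * K + 7) (by omega) (by omega)
    obtain rfl | rfl : r = 0 ∨ r = -1 := by omega
    · left
      simp only [vec3_eq_iff]
      omega
    · right
      refine ⟨s - x 1, by omega, ?_⟩
      simp only [vec3_eq_iff]
      omega
  · rintro (rfl | ⟨i, hi, rfl⟩)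
    · exact h₀
    · rw [mem_Zset_gens]
      simp only [Matrix.cons_val]
      zify [show 3 * i ≤ 3 * K + 5 by omega, hi]
      ring

theorem catDeg_mul_gens_two (K : ℕ) : catDeg (gens K) (2 * (6 * K + 17)) = 4 := by
  rw [catDeg_eq_fdist_of_pair (by simp) fun _ => mem_Zset_mul_gens_two_iff]
  simp [fdist_fin_three]

theorem catDeg_mul_gens_zero (K : ℕ) :
    catDeg (gens K) ((3 * K + 8) * (2 * K + 7)) = 3 * K + 8 := by
  rw [catDeg_eq_fdist_of_pair (by simp) fun _ => mem_Zset_mul_gens_zero_iff]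
  simp only [fdist_fin_three, Matrix.cons_val]
  omega

theorem isNChain_mul_gens_one {s : ℕ} (hs : s ≤ K + 1)
    (hx : x ∈ Zset (gens K) ((K + 4 + s) * (6 * K + 13))) :
    IsNChain (Zset (gens K) ((K + 4 + s) * (6 * K + 13))) (3 * K + 6 - s) x
      ![0, K + 4 + s, 0] := by
  have hmem := fun x => mem_Zset_mul_gens_one_iff (x := x) hs
  have hmix : ∀ i ≤ s, ![3 * K + 5 - 3 * i, s - i, 2 * i + 1] ∈
      Zset (gens K) ((K + 4 + s) * (6 * K + 13)) := fun i hi => (hmem _).2 (.inr ⟨i, hi, rfl⟩)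
  suffices h : ∀ j i, i + j = s → IsNChain (Zset (gens K) ((K + 4 + s) * (6 * K + 13)))
      (3 * K + 6 - s) ![3 * K + 5 - 3 * i, s - i, 2 * i + 1] ![0, K + 4 + s, 0] by
    rcases (hmem x).1 hx with rfl | ⟨i, hi, rfl⟩
    exacts [.refl hx, h (s - i) i (by omega)]
  intro j
  induction j with
  | zero =>
    intro i hi
    refine .of_fdist_le (hmix i (by omega)) ((hmem ![0, K + 4 + s, 0]).2 (.inl rfl)) ?_
    simp only [fdist_fin_three, Matrix.cons_val]
    omega
  | succ j ih =>
    intro i hi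
    refine .trans (.of_fdist_le (hmix i (by omega)) (hmix (i + 1) (by omega)) ?_)
      (ih (i + 1) (by omega))
    simp only [fdist_fin_three, Matrix.cons_val]
    omega

theorem catDeg_mul_gens_one {s : ℕ} (hs : s ≤ K + 1) :
    catDeg (gens K) ((K + 4 + s) * (6 * K + 13)) = 3 * K + 6 - s := by
  have hmem := fun x => mem_Zset_mul_gens_one_iff (x := x) hs
  refine catDeg_eq_of_isolated
    (fun x hx y hy => (isNChain_mul_gens_one hs hx).trans (isNChain_mul_gens_one hs hy).symm)
    ((hmem ![0, K + 4 + s, 0]).2 (.inl rfl))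
    ((hmem ![3 * K + 5 - 3 * s, 0, 2 * s + 1]).2 (.inr ⟨s, le_rfl, by simp⟩))
    (by simp) fun x hx hne => ?_
  obtain ⟨i, hi, rfl⟩ := ((hmem x).1 hx).resolve_left hne
  simp only [fdist_fin_three, Matrix.cons_val]
  omega

theorem isNChain_of_reduced (hx : x ∈ Zset (gens K) n) (hy : y ∈ Zset (gens K) n)
    (hx₁ : x 1 ≤ 2 * K + 4) (hx₂ : x 2 ≤ 1) (hy₁ : y 1 ≤ 2 * K + 4) (hy₂ : y 2 ≤ 1) :
    IsNChain (Zset (gens K) n) (3 * K + 8) x y := by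
  obtain ⟨r, hL, hM⟩ := exists_trade_multiple hx hy
  have hr₁ : r < 2 := Int.lt_of_mul_lt_mul_right (a := 2 * K + 7) (by omega) (by omega)
  have hr₂ : -2 < r := Int.lt_of_mul_lt_mul_right (a := 2 * K + 7) (by omega) (by omega)
  refine .of_fdist_le hx hy ?_
  rw [fdist_fin_three]
  obtain rfl | rfl | rfl : r = -1 ∨ r = 0 ∨ r = 1 := by omega
  all_goals omega

theorem exists_reduced_isNChain (hx : x ∈ Zset (gens K) n) :
    ∃ z ∈ Zset (gens K) n, z 1 ≤ 2 * K + 4 ∧ z 2 ≤ 1 ∧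
      IsNChain (Zset (gens K) n) (3 * K + 8) x z := by
  induction hm : x 1 + x 2 using Nat.strong_induction_on generalizing x with
  | _ m ih =>
  have hx' := mem_Zset_gens.1 hx
  by_cases h₂ : 2 ≤ x 2
  · -- the trade `3g₀ + g₁ = 2g₂`
    have hx'' : ![x 0 + 3, x 1 + 1, x 2 - 2] ∈ Zset (gens K) n := by
      rw [mem_Zset_gens, ← hx']
      simp only [Matrix.cons_val]
      zify [h₂]
      ring
    obtain ⟨z, hz, hz₁, hz₂, hchain⟩ := ih (x 1 + 1 + (x 2 - 2)) (by omega) hx'' rfl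
    refine ⟨z, hz, hz₁, hz₂, .trans (.of_fdist_le hx hx'' ?_) hchain⟩
    simp only [fdist_fin_three, Matrix.cons_val]
    omega
  by_cases h₁ : 2 * K + 5 ≤ x 1
  · -- the trade `2g₀ + (2K+3)g₂ = (2K+5)g₁`
    have hx'' : ![x 0 + 2, x 1 - (2 * K + 5), x 2 + (2 * K + 3)] ∈ Zset (gens K) n := by
      rw [mem_Zset_gens, ← hx']
      simp only [Matrix.cons_val]
      zify [h₁]
      ring
    obtain ⟨z, hz, hz₁, hz₂, hchain⟩ :=
      ih (x 1 - (2 * K + 5) + (x 2 + (2 * K + 3))) (by omega) hx'' rfl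
    refine ⟨z, hz, hz₁, hz₂, .trans (.of_fdist_le hx hx'' ?_) hchain⟩
    simp only [fdist_fin_three, Matrix.cons_val]
    omega
  exact ⟨x, hx, by omega, by omega, .refl hx⟩

theorem catDeg_le : catDeg (gens K) n ≤ 3 * K + 8 := by
  refine Nat.sInf_le fun x hx y hy => ?_
  obtain ⟨x', hx', hx₁, hx₂, hxx'⟩ := exists_reduced_isNChain hx
  obtain ⟨y', hy', hy₁, hy₂, hyy'⟩ := exists_reduced_isNChain hy
  exact hxx'.trans ((isNChain_of_reduced hx' hy' hx₁ hx₂ hy₁ hy₂).trans hyy'.symm)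

theorem catSet_finite (K : ℕ) : (CatSet (gens K)).Finite :=
  (Set.finite_Iic (3 * K + 8)).subset fun _ ⟨_, _, hc⟩ => hc ▸ catDeg_le

theorem subset_catSet (K : ℕ) :
    {4, 3 * K + 8} ∪ Set.Icc (2 * K + 5) (3 * K + 6) ⊆ CatSet (gens K) := by
  rintro c ((rfl | rfl) | ⟨hc₁, hc₂⟩)
  · exact ⟨_, ⟨_, mem_Zset_mul_gens_two_iff.2 (.inl rfl)⟩, catDeg_mul_gens_two K⟩
  · exact ⟨_, ⟨_, mem_Zset_mul_gens_zero_iff.2 (.inl rfl)⟩, catDeg_mul_gens_zero K⟩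
  · have hs : 3 * K + 6 - c ≤ K + 1 := by omega
    refine ⟨_, ⟨_, (mem_Zset_mul_gens_one_iff hs).2 (.inl rfl)⟩, ?_⟩
    rw [catDeg_mul_gens_one hs]
    omega

theorem ncard_insert_insert_Icc (K : ℕ) :
    ({4, 3 * K + 8} ∪ Set.Icc (2 * K + 5) (3 * K + 6) : Set ℕ).ncard = K + 4 := by
  rw [Set.insert_union, Set.singleton_union,
    Set.ncard_insert_of_notMem (by simp) ((Set.finite_Icc _ _).insert _),
    Set.ncard_insert_of_notMem (by simp) (Set.finite_Icc _ _), Set.ncard_eq_toFinset_card',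
    Set.toFinset_Icc, Nat.card_Icc]
  omega

end CatSetLarge

open CatSetLarge in
/-- For k ≥ 3 and S = ⟨2k+1, 6k-5, 6k-1⟩, C(S) contains {4, 3k-1} and the
interval {2k-1, ..., 3k-3}; in particular |C(S)| ≥ k. -/
theorem catSet_large (k : ℕ) (hk : 3 ≤ k) :
    ({4, 3 * k - 1} ∪ Set.Icc (2 * k - 1) (3 * k - 3)
        ⊆ CatSet ![2 * k + 1, 6 * k - 5, 6 * k - 1]) ∧
    k ≤ (CatSet ![2 * k + 1, 6 * k - 5, 6 * k - 1]).ncard := by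
  obtain ⟨K, rfl⟩ : ∃ K, k = K + 3 := ⟨k - 3, by omega⟩
  have hgens : ![2 * (K + 3) + 1, 6 * (K + 3) - 5, 6 * (K + 3) - 1] = gens K :=
    Matrix.vec3_eq (by omega) (by omega) (by omega)
  rw [hgens, show 3 * (K + 3) - 1 = 3 * K + 8 by omega, show 2 * (K + 3) - 1 = 2 * K + 5 by omega,
    show 3 * (K + 3) - 3 = 3 * K + 6 by omega]
  refine ⟨subset_catSet K, ?_⟩
  have := Set.ncard_le_ncard (subset_catSet K) (catSet_finite K)
  rw [ncard_insert_insert_Icc] at this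
  omega
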